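/- Let $2<p<4$, $a>0$, and let $D, E, G>0$ with $a< 2(p-2)(4-p)^{(4-p)/(p-2)}\left(\frac{G}{pD^{p/2}}\right)^{2/(p-2)}$, where $D=\int_\Omega|\nabla\varphi|^2$, $E=\int_\Omega f\varphi^2\geq 0$, $G=\int_\Omega g|\varphi|^p$. Set $t_a=\left(\frac{2(p-2)G}{apD^2}\right)^{1/(4-p)}$. Then for any $\lambda>0$, $\frac{t_a^2}{2}D + \frac{a}{4}D^2t_a^4 - \frac{G}{p}t_a^p - \frac{\lambda}{2}E t_a^2 < 0$, i.e. $J_{a,\lambda}(t_a\varphi)<0$. -/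

import Mathlib

/-- The special point `t_a = (2(p-2)G/(apD²))^{1/(4-p)}`. -/
noncomputable def tA8 (p a D G : ℝ) : ℝ :=
  (2 * (p - 2) * G / (a * p * D ^ 2)) ^ ((1 : ℝ) / (4 - p))

/-! At `t = t_a` one has `t^(4-p) = 2(p-2)G/(apD²)`, so the quartic term equals `(p-2)G/(2p) · t^p`
and the expression collapses to `t²/2 · (D - (4-p)/p · G t^(p-2) - λE)`. Raised to the power
`(4-p)/(p-2)`, the inequality `pD < (4-p) G t^(p-2)` is exactly the assumed bound on `a`. -/

open Real

lemma tA8_pos {p a D G : ℝ} (hp2 : 2 < p) (ha : 0 < a) (hD : 0 < D) (hG : 0 < G) :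
    0 < tA8 p a D G := by
  have hp : 0 < p := by linarith
  have hp2' : 0 < p - 2 := by linarith
  unfold tA8
  positivity

lemma tA8_rpow_four_sub {p a D G : ℝ} (hp4 : p ≠ 4) (hbase : 0 ≤ 2 * (p - 2) * G / (a * p * D ^ 2)) :
    tA8 p a D G ^ (4 - p) = 2 * (p - 2) * G / (a * p * D ^ 2) := by
  rw [tA8, one_div, rpow_inv_rpow hbase (sub_ne_zero.mpr hp4.symm)]

lemma energy_eq_of_critical {p a D E G lam t : ℝ} (hp : p ≠ 0) (ha : a ≠ 0) (hD : D ≠ 0)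
    (ht : 0 < t) (hcrit : t ^ (4 - p) = 2 * (p - 2) * G / (a * p * D ^ 2)) :
    t ^ 2 / 2 * D + a / 4 * D ^ 2 * t ^ 4 - G / p * t ^ p - lam / 2 * E * t ^ 2 =
      t ^ 2 / 2 * (D - (4 - p) / p * G * t ^ (p - 2) - lam * E) := by
  have h4 : t ^ 4 = t ^ 2 * t ^ (p - 2) * t ^ (4 - p) := by
    rw [mul_assoc, ← rpow_add ht, ← rpow_natCast, ← rpow_natCast, ← rpow_add ht]; norm_num
  have hp2 : t ^ p = t ^ 2 * t ^ (p - 2) := by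
    rw [← rpow_natCast, ← rpow_add ht]; norm_num
  rw [h4, hp2, hcrit]
  field_simp
  ring

lemma bound_rpow_eq {p D G : ℝ} (hp2 : 2 < p) (hp4 : p < 4) (hD : 0 < D) (hG : 0 < G) :
    (4 - p) ^ ((4 - p) / (p - 2)) * (G / (p * D ^ (p / 2))) ^ (2 / (p - 2)) =
      G / (p * D ^ 2) * ((4 - p) * G / (p * D)) ^ ((4 - p) / (p - 2)) := by
  have hp : 0 < p := by linarith
  have hp2' : p - 2 ≠ 0 := by linarith
  have hp4' : 0 < 4 - p := by linarith
  set q := (4 - p) / (p - 2) with hq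
  have h1q : 2 / (p - 2) = 1 + q := by rw [hq]; field_simp; ring
  have h2q : p / 2 * (1 + q) = 2 + q := by rw [hq]; field_simp; ring
  rw [div_rpow hG.le (by positivity), mul_rpow hp.le (by positivity), h1q, ← rpow_mul hD.le, h2q,
    rpow_add hG, rpow_add hp, rpow_add hD, rpow_one, rpow_one, rpow_two,
    div_rpow (mul_nonneg hp4'.le hG.le) (by positivity), mul_rpow hp4'.le hG.le, mul_rpow hp.le hD.le]
  field_simp

lemma lt_mul_rpow_sub_two_of_lt_bound {p a D G t : ℝ} (hp2 : 2 < p) (hp4 : p < 4) (ha : 0 < a)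
    (hD : 0 < D) (hG : 0 < G) (ht : 0 < t)
    (hcrit : t ^ (4 - p) = 2 * (p - 2) * G / (a * p * D ^ 2))
    (hbound : a < 2 * (p - 2) * (4 - p) ^ ((4 - p) / (p - 2)) *
        (G / (p * D ^ (p / 2))) ^ (2 / (p - 2))) :
    p * D < (4 - p) * G * t ^ (p - 2) := by
  have hp : 0 < p := by linarith
  have hp2' : 0 < p - 2 := by linarith
  have hp4' : 0 < 4 - p := by linarith
  rw [mul_assoc, bound_rpow_eq hp2 hp4 hD hG] at hbound
  set q := (4 - p) / (p - 2) with hq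
  set N := (4 - p) * G / (p * D)
  have hN : 0 < N := by positivity
  have hpow : (t ^ (p - 2) * N) ^ q = t ^ (4 - p) * N ^ q := by
    rw [mul_rpow (rpow_nonneg ht.le _) hN.le, ← rpow_mul ht.le, hq, mul_div_cancel₀ _ hp2'.ne']
  have hpow_gt : 1 < (t ^ (p - 2) * N) ^ q := by
    rw [hpow, hcrit, div_mul_eq_mul_div, one_lt_div (by positivity), mul_assoc a]
    calc a * (p * D ^ 2) < 2 * (p - 2) * (G / (p * D ^ 2) * N ^ q) * (p * D ^ 2) :=
          mul_lt_mul_of_pos_right hbound (by positivity)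
      _ = 2 * (p - 2) * G * N ^ q := by field_simp
  have hgt : 1 < t ^ (p - 2) * N := by
    by_contra! hle
    exact hpow_gt.not_ge (rpow_le_one (by positivity) hle (by positivity))
  rw [← mul_div_assoc, one_lt_div (by positivity)] at hgt
  linarith

/-- Let `2 < p < 4`, `a > 0`, `D, G > 0`, `E ≥ 0` with
`a < 2(p-2)(4-p)^{(4-p)/(p-2)}(G/(pD^{p/2}))^{2/(p-2)}`. Then for any `λ > 0`,
`(t_a²/2)D + (a/4)D²t_a⁴ - (G/p)t_a^p - (λ/2)E·t_a² < 0`. -/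
theorem stmt_8 (p a D E G lam : ℝ) (hp2 : 2 < p) (hp4 : p < 4) (ha : 0 < a) (hD : 0 < D)
    (hE : 0 ≤ E) (hG : 0 < G) (hlam : 0 < lam)
    (hbound : a < 2 * (p - 2) * (4 - p) ^ ((4 - p) / (p - 2)) *
        (G / (p * D ^ (p / 2))) ^ (2 / (p - 2))) :
    tA8 p a D G ^ 2 / 2 * D + a / 4 * D ^ 2 * tA8 p a D G ^ 4 - G / p * tA8 p a D G ^ p -
      lam / 2 * E * tA8 p a D G ^ 2 < 0 := by
  have hp : 0 < p := by linarith
  have ht := tA8_pos hp2 ha hD hG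
  have hcrit : tA8 p a D G ^ (4 - p) = _ :=
    tA8_rpow_four_sub hp4.ne (div_nonneg (by nlinarith) (by positivity))
  have hkey := lt_mul_rpow_sub_two_of_lt_bound hp2 hp4 ha hD hG ht hcrit hbound
  rw [energy_eq_of_critical hp.ne' ha.ne' hD.ne' ht hcrit]
  refine mul_neg_of_pos_of_neg (by positivity) ?_
  have hdiv : D < (4 - p) / p * G * tA8 p a D G ^ (p - 2) := by
    rw [div_mul_eq_mul_div, div_mul_eq_mul_div, lt_div_iff₀ hp]
    linarith
  linarith [mul_nonneg hlam.le hE]
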